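/- arXiv:1807.02773 — 4 statements merged into one kernel-verified Lean document; each statement's English description precedes it below -/
import Mathlib

section
/- If A and B are compact convex sets in ℝ² with B ⊆ A, then the perimeter (boundary length) of B is at most the perimeter of A. -/
open MeasureTheory
open scoped InnerProductSpace

section Aux

variable {E : Type*} [NormedAddCommGroup E] [InnerProductSpace ℝ E]

lemma sum_inner_vi {B : Set E} {p q u v : E} (hu : u ∈ B) (hv : v ∈ B)
    (h1 : ∀ b ∈ B, ⟪p - u, b - u⟫_ℝ ≤ 0) (h2 : ∀ b ∈ B, ⟪q - v, b - v⟫_ℝ ≤ 0) :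
    ⟪u - v, u - v⟫_ℝ ≤ ⟪p - q, u - v⟫_ℝ := by
  have a1 := h1 v hv
  have a2 := h2 u hu
  have e1 : ⟪p - u, v - u⟫_ℝ = -⟪p - u, u - v⟫_ℝ := by
    rw [show (v - u : E) = -(u - v) by abel, inner_neg_right]
  have e2 : ⟪p - q, u - v⟫_ℝ - ⟪u - v, u - v⟫_ℝ = ⟪p - u, u - v⟫_ℝ - ⟪q - v, u - v⟫_ℝ := by
    rw [← inner_sub_left, ← inner_sub_left]
    congr 1
    abel
  linarith

/-- Existence of a well-behaved metric projection onto a nonempty closed convex set. -/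
lemma exists_proj {B : Set E} [CompleteSpace E] (hBne : B.Nonempty) (hBcl : IsClosed B)
    (hconv : Convex ℝ B) :
    ∃ f : E → E, (∀ p, f p ∈ B) ∧ (∀ p, ∀ b ∈ B, ⟪p - f p, b - f p⟫_ℝ ≤ 0) ∧
      LipschitzWith 1 f := by
  choose f hf1 hf2 using
    exists_norm_eq_iInf_of_complete_convex hBne hBcl.isComplete hconv
  have key : ∀ p, ∀ b ∈ B, ⟪p - f p, b - f p⟫_ℝ ≤ 0 := fun p =>
    (norm_eq_iInf_iff_real_inner_le_zero hconv (hf1 p)).1 (hf2 p)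
  refine ⟨f, hf1, key, ?_⟩
  rw [lipschitzWith_iff_dist_le_mul]
  intro p q
  simp only [NNReal.coe_one, one_mul, dist_eq_norm]
  have h := sum_inner_vi (hf1 p) (hf1 q) (key p) (key q)
  have h2 : ⟪p - q, f p - f q⟫_ℝ ≤ ‖p - q‖ * ‖f p - f q‖ := real_inner_le_norm _ _
  have h3 : ⟪f p - f q, f p - f q⟫_ℝ = ‖f p - f q‖ ^ 2 := real_inner_self_eq_norm_sq _
  nlinarith [norm_nonneg (f p - f q), norm_nonneg (p - q)]

/-- Uniqueness of the point satisfying the variational inequality. -/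
lemma proj_unique_aux {B : Set E} {p u v : E} (hu : u ∈ B) (hv : v ∈ B)
    (h1 : ∀ b ∈ B, ⟪p - u, b - u⟫_ℝ ≤ 0) (h2 : ∀ b ∈ B, ⟪p - v, b - v⟫_ℝ ≤ 0) :
    u = v := by
  have h := sum_inner_vi hu hv h1 h2
  rw [sub_self, inner_zero_left] at h
  have : u - v = 0 := by rwa [real_inner_self_nonpos] at h
  exact sub_eq_zero.mp this

lemma mem_closure_interior_of_convex {s : Set E} (hs : Convex ℝ s) {a b : E}
    (ha : a ∈ interior s) (hb : b ∈ s) : b ∈ closure (interior s) := by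
  have key : ∀ n : ℕ, (1 - 1 / (n + 1 : ℝ)) • b + (1 / (n + 1 : ℝ)) • a ∈ interior s := by
    intro n
    apply hs.combo_closure_interior_mem_interior (subset_closure hb) ha
    · have h1 : (1:ℝ) ≤ (n:ℝ) + 1 := by
        have := Nat.cast_nonneg (α := ℝ) n; linarith
      have : 1 / ((n:ℝ) + 1) ≤ 1 := by
        rw [div_le_one (by linarith)]; linarith
      linarith
    · positivity
    · ring
  have htend : Filter.Tendsto (fun n : ℕ => (1 - 1 / (n + 1 : ℝ)) • b + (1 / (n + 1 : ℝ)) • a)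
      Filter.atTop (nhds b) := by
    have h0 : Filter.Tendsto (fun n : ℕ => 1 / (n + 1 : ℝ)) Filter.atTop (nhds 0) :=
      tendsto_one_div_add_atTop_nhds_zero_nat
    have h1 : Filter.Tendsto (fun n : ℕ => (1 - 1 / (n + 1 : ℝ))) Filter.atTop (nhds 1) := by
      simpa using (tendsto_const_nhds (x := (1:ℝ)) (f := Filter.atTop (α := ℕ))).sub h0
    have h2 := (h1.smul (tendsto_const_nhds (x := b) (f := Filter.atTop (α := ℕ)))).add
      (h0.smul (tendsto_const_nhds (x := a) (f := Filter.atTop (α := ℕ))))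
    simpa using h2
  exact mem_closure_of_tendsto htend (Filter.Eventually.of_forall key)

/-- Every boundary point of `B` is the projection of some boundary point of `A`. -/
lemma frontier_subset_proj_image {A B : Set E} [CompleteSpace E]
    (hAc : IsCompact A) (hBcl : IsClosed B) (hBconv : Convex ℝ B)
    (hBint : (interior B).Nonempty) (hBA : B ⊆ A)
    {f : E → E} (hfmem : ∀ p, f p ∈ B) (hfvi : ∀ p, ∀ b ∈ B, ⟪p - f p, b - f p⟫_ℝ ≤ 0) :
    frontier B ⊆ f '' frontier A := by
  intro x hx
  rw [hBcl.frontier_eq] at hx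
  obtain ⟨hxB, hxni⟩ := hx
  obtain ⟨g, hg⟩ := geometric_hahn_banach_open_point hBconv.interior isOpen_interior hxni
  set n : E := (InnerProductSpace.toDual ℝ E).symm g with hn
  have hgn : ∀ y : E, ⟪n, y⟫_ℝ = g y := fun y => InnerProductSpace.toDual_symm_apply
  have hBle : ∀ b ∈ B, g b ≤ g x := by
    intro b hb
    have hbc : b ∈ closure (interior B) :=
      mem_closure_interior_of_convex hBconv hBint.some_mem hb
    have hcl : closure (interior B) ⊆ {y | g y ≤ g x} :=
      closure_minimal (fun y hy => (hg y hy).le)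
        (isClosed_le g.continuous continuous_const)
    exact hcl hbc
  have hproj : ∀ t : ℝ, 0 ≤ t → f (x + t • n) = x := by
    intro t ht
    refine proj_unique_aux (hfmem _) hxB (hfvi _) ?_
    intro b hb
    have e : x + t • n - x = t • n := by abel
    rw [e, real_inner_smul_left]
    have e2 : ⟪n, b - x⟫_ℝ = g b - g x := by
      rw [inner_sub_right, hgn, hgn]
    rw [e2]
    have := hBle b hb
    nlinarith
  -- the ray leaves A
  obtain ⟨C, hC⟩ := isBounded_iff_forall_norm_le.mp hAc.isBounded
  have hn0 : ‖n‖ ≠ 0 := by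
    intro h
    obtain ⟨a, ha⟩ := hBint
    have h0 : n = 0 := norm_eq_zero.mp h
    have h1 := hgn a
    have h2 := hgn x
    rw [h0, inner_zero_left] at h1 h2
    have := hg a ha
    rw [← h1, ← h2] at this
    exact lt_irrefl 0 this
  have hnpos : 0 < ‖n‖ := lt_of_le_of_ne (norm_nonneg n) (Ne.symm hn0)
  set S : Set ℝ := {t | 0 ≤ t ∧ x + t • n ∈ A} with hS
  have hS0 : (0:ℝ) ∈ S := ⟨le_refl 0, by simpa using hBA hxB⟩
  have hSbd : BddAbove S := by
    refine ⟨(C + ‖x‖) / ‖n‖, fun t ht => ?_⟩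
    obtain ⟨ht0, htA⟩ := ht
    have h1 : ‖x + t • n‖ ≤ C := hC _ htA
    have h2 : ‖t • n‖ ≤ ‖x + t • n‖ + ‖x‖ := by
      have e : x + t • n - x = t • n := by abel
      calc ‖t • n‖ = ‖x + t • n - x‖ := by rw [e]
        _ ≤ ‖x + t • n‖ + ‖x‖ := norm_sub_le _ _
    have h3 : t * ‖n‖ ≤ C + ‖x‖ := by
      rw [norm_smul, Real.norm_eq_abs, abs_of_nonneg ht0] at h2
      linarith
    rw [le_div_iff₀ hnpos]
    exact h3
  have hcont : Continuous (fun t : ℝ => x + t • n) :=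
    continuous_const.add (continuous_id.smul continuous_const)
  have hScl : IsClosed S := by
    have : S = Set.Ici (0:ℝ) ∩ (fun t : ℝ => x + t • n) ⁻¹' A := by
      ext t; simp [hS, Set.mem_Ici]
    rw [this]
    exact isClosed_Ici.inter (hAc.isClosed.preimage hcont)
  set t₀ : ℝ := sSup S with ht₀
  have ht₀S : t₀ ∈ S := hScl.csSup_mem ⟨0, hS0⟩ hSbd
  obtain ⟨ht₀0, hyA⟩ := ht₀S
  have hyni : x + t₀ • n ∉ interior A := by
    intro hy
    have hopen : IsOpen ((fun t : ℝ => x + t • n) ⁻¹' interior A) :=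
      isOpen_interior.preimage hcont
    obtain ⟨ε, hε, hball⟩ := Metric.isOpen_iff.mp hopen t₀ hy
    have hmem : t₀ + ε / 2 ∈ S := by
      refine ⟨by linarith, interior_subset (hball ?_)⟩
      rw [Metric.mem_ball, Real.dist_eq, show t₀ + ε / 2 - t₀ = ε / 2 by ring,
        abs_of_nonneg (by linarith : (0:ℝ) ≤ ε / 2)]
      linarith
    have := le_csSup hSbd hmem
    linarith
  have hyfr : x + t₀ • n ∈ frontier A := by
    rw [hAc.isClosed.frontier_eq]
    exact ⟨hyA, hyni⟩
  exact ⟨x + t₀ • n, hyfr, hproj t₀ ht₀0⟩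

end Aux

theorem perimeter_mono (A B : Set (EuclideanSpace ℝ (Fin 2)))
    (hAc : IsCompact A) (hAconv : Convex ℝ A) (hAint : (interior A).Nonempty)
    (hBc : IsCompact B) (hBconv : Convex ℝ B) (hBint : (interior B).Nonempty)
    (hBA : B ⊆ A) :
    μH[1] (frontier B) ≤ μH[1] (frontier A) := by
  have hBne : B.Nonempty := hBint.mono interior_subset
  obtain ⟨f, hfmem, hfvi, hflip⟩ := exists_proj hBne hBc.isClosed hBconv
  have hsub : frontier B ⊆ f '' frontier A :=
    frontier_subset_proj_image hAc hBc.isClosed hBconv hBint hBA hfmem hfvi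
  calc μH[1] (frontier B) ≤ μH[1] (f '' frontier A) := measure_mono hsub
    _ ≤ (1 : NNReal) ^ (1:ℝ) * μH[1] (frontier A) :=
        hflip.hausdorffMeasure_image_le (by norm_num) _
    _ = μH[1] (frontier A) := by simp
end

section
/- Deterministic one-dimensional spiral (doubling) search is 9-competitive: suppose a target lies at unknown distance Q from the origin on a line, with 2^{j-1} < Q ≤ 2^{j+1} for some j ≥ 0. The doubling strategy, which travels distance 2^k alternately right and left and returns to the origin after each excursion until the target is found, travels total distance at most 2·2^{j+1} + Q ≤ 9·Q. -/
theorem spiral_search_nine_competitive (Q : ℝ) (j : ℕ) (hj : 1 ≤ j)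
    (hQpos : 0 < Q)
    (hlb : (2 : ℝ) ^ (j - 1) < Q) (hub : Q ≤ (2 : ℝ) ^ (j + 1)) :
    (∑ k ∈ Finset.range (j + 1), 2 * (2 : ℝ) ^ k) + Q ≤ 2 * 2 ^ (j + 1) + Q ∧
      2 * (2 : ℝ) ^ (j + 1) + Q ≤ 9 * Q := by
  constructor
  · have : (∑ k ∈ Finset.range (j + 1), 2 * (2 : ℝ) ^ k)
        = 2 * (2 ^ (j + 1) - 1) := by
      rw [← Finset.mul_sum, geom_sum_eq (by norm_num)]
      ring
    rw [this]; linarith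
  · have h4 : (2 : ℝ) ^ (j + 1) = 4 * 2 ^ (j - 1) := by
      have : j + 1 = (j - 1) + 2 := by omega
      rw [this, pow_add]; ring
    rw [h4]; linarith
end

section
/- Let A and B be compact convex sets in H (a closed half-plane) both containing the segment [p,q] in their boundary, with B ⊆ A. Then the length of the boundary arc of B from p to q inside H is at most the length of the boundary arc of A from p to q inside H. -/
open MeasureTheory Set Metric RealInnerProductSpace

section Aux

variable {E : Type*} [NormedAddCommGroup E] [InnerProductSpace ℝ E]

lemma exists_mem_frontier_of_path' {A : Set E} {φ : ℝ → E}
    (hφ : Continuous φ) {t : ℝ} (ht : 0 ≤ t) (h0 : φ 0 ∈ A) (h1 : φ t ∉ A) :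
    ∃ s, 0 ≤ s ∧ φ s ∈ frontier A := by
  set S : Set ℝ := {s | s ∈ Icc 0 t ∧ φ s ∉ A} with hS
  have hSne : S.Nonempty := ⟨t, ⟨ht, le_refl t⟩, h1⟩
  have hSbdd : BddBelow S := ⟨0, fun s hs => hs.1.1⟩
  set s0 := sInf S with hs0
  have hglb : IsGLB S s0 := Real.isGLB_sInf hSne hSbdd
  have hs00 : 0 ≤ s0 := le_csInf hSne fun s hs => hs.1.1
  have hs0t : s0 ≤ t := csInf_le hSbdd ⟨⟨ht, le_refl t⟩, h1⟩
  refine ⟨s0, hs00, ?_⟩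
  rw [frontier_eq_closure_inter_closure]
  refine ⟨?_, ?_⟩
  · rcases eq_or_lt_of_le hs00 with h | h
    · exact subset_closure (h ▸ h0)
    · have hmem : s0 ∈ closure (Ico (0:ℝ) s0) := by
        rw [closure_Ico h.ne]
        exact ⟨hs00, le_refl _⟩
      have hmap : MapsTo φ (Ico (0:ℝ) s0) A := by
        intro s hs
        by_contra hns
        exact absurd (hglb.1 ⟨⟨hs.1, hs.2.le.trans hs0t⟩, hns⟩) (not_le.2 hs.2)
      exact map_mem_closure hφ hmem hmap
  · exact map_mem_closure hφ (hglb.mem_closure hSne) fun s hs => hs.2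

/-- Characterization predicate for nearest-point projection onto a convex set. -/
def IsProjOn (B : Set E) (x z : E) : Prop :=
  z ∈ B ∧ ∀ b ∈ B, ⟪x - z, b - z⟫ ≤ 0

lemma isProjOn_unique {B : Set E} {x z1 z2 : E}
    (h1 : IsProjOn B x z1) (h2 : IsProjOn B x z2) : z1 = z2 := by
  have a1 := h1.2 z2 h2.1
  have a2 := h2.2 z1 h1.1
  have h3 : (0:ℝ) ≤ ⟪x - z2, z2 - z1⟫ := by
    rw [show z2 - z1 = -(z1 - z2) by abel, inner_neg_right]
    linarith
  have h4 : ⟪z2 - z1, z2 - z1⟫ = ⟪x - z1, z2 - z1⟫ - ⟪x - z2, z2 - z1⟫ := by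
    rw [← inner_sub_left]; congr 1; abel
  have key : ⟪z2 - z1, z2 - z1⟫ ≤ 0 := by linarith
  have h0 : ⟪z2 - z1, z2 - z1⟫ = 0 := le_antisymm key real_inner_self_nonneg
  have := inner_self_eq_zero.1 (by exact_mod_cast h0)
  symm; rwa [sub_eq_zero] at this

lemma exists_isProjOn {B : Set E} (hBc : IsCompact B) (hBconv : Convex ℝ B)
    (hBne : B.Nonempty) (x : E) : ∃ z, IsProjOn B x z := by
  obtain ⟨z, hzB, hz⟩ := exists_norm_eq_iInf_of_complete_convex hBne hBc.isComplete hBconv x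
  exact ⟨z, hzB, (norm_eq_iInf_iff_real_inner_le_zero hBconv hzB).1 hz⟩

lemma isProjOn_dist {B : Set E} {x y z w : E}
    (h1 : IsProjOn B x z) (h2 : IsProjOn B y w) : ‖z - w‖ ≤ ‖x - y‖ := by
  have a1 := h1.2 w h2.1
  have a2 := h2.2 z h1.1
  have e1 : ⟪z - w, z - w⟫ = ⟪z - x, z - w⟫ + ⟪x - y, z - w⟫ + ⟪y - w, z - w⟫ := by
    rw [← inner_add_left, ← inner_add_left]; congr 1; abel
  have e2 : ⟪z - x, z - w⟫ = ⟪x - z, w - z⟫ := by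
    rw [show z - x = -(x - z) by abel, show z - w = -(w - z) by abel, inner_neg_neg]
  have e3 : ⟪x - y, z - w⟫ ≤ ‖x - y‖ * ‖z - w‖ := real_inner_le_norm _ _
  have e4 : ⟪z - w, z - w⟫ = ‖z - w‖ ^ 2 := real_inner_self_eq_norm_sq _
  nlinarith [norm_nonneg (z - w), norm_nonneg (x - y)]

lemma isProjOn_ray {B : Set E} {x z : E} (h : IsProjOn B x z) {t : ℝ} (ht : 0 ≤ t) :
    IsProjOn B (z + t • (x - z)) z := by
  refine ⟨h.1, fun b hb => ?_⟩
  have : (z + t • (x - z)) - z = t • (x - z) := by abel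
  rw [this, real_inner_smul_left]
  have := h.2 b hb
  nlinarith

lemma isProjOn_self {B : Set E} {z : E} (hz : z ∈ B) : IsProjOn B z z :=
  ⟨hz, fun b hb => by simp⟩

end Aux

theorem boundary_arc_length_mono
    (f : EuclideanSpace ℝ (Fin 2) →ₗ[ℝ] ℝ) (hf : f ≠ 0) (c : ℝ)
    (H : Set (EuclideanSpace ℝ (Fin 2))) (hH : H = {x | c ≤ f x})
    (p q : EuclideanSpace ℝ (Fin 2)) (hpL : f p = c) (hqL : f q = c)
    (A B : Set (EuclideanSpace ℝ (Fin 2)))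
    (hAc : IsCompact A) (hAconv : Convex ℝ A) (hAH : A ⊆ H)
    (hBc : IsCompact B) (hBconv : Convex ℝ B) (hBH : B ⊆ H)
    (hsegA : segment ℝ p q ⊆ frontier A) (hsegB : segment ℝ p q ⊆ frontier B)
    (hBA : B ⊆ A) :
    μH[1] (frontier B \ openSegment ℝ p q) ≤ μH[1] (frontier A \ openSegment ℝ p q) := by
  classical
  set S := openSegment ℝ p q with hSdef
  have hBcl : IsClosed B := hBc.isClosed
  have hfrB : frontier B ⊆ B := hBcl.frontier_subset
  have hSB : S ⊆ B := fun x hx => hfrB (hsegB (openSegment_subset_segment ℝ p q hx))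
  have hBne : B.Nonempty := ⟨p, hfrB (hsegB (left_mem_segment ℝ p q))⟩
  choose g hg using fun x => exists_isProjOn hBc hBconv hBne x
  have hgLip : LipschitzWith 1 g := by
    refine LipschitzWith.of_dist_le_mul fun x y => ?_
    rw [NNReal.coe_one, one_mul, dist_eq_norm, dist_eq_norm]
    exact isProjOn_dist (hg x) (hg y)
  have hgfix : ∀ z ∈ B, g z = z := fun z hz => isProjOn_unique (hg z) (isProjOn_self hz)
  have hAcl : IsClosed A := hAc.isClosed
  have hfrA_cpt : IsCompact (frontier A) :=
    hAc.of_isClosed_subset isClosed_frontier hAcl.frontier_subset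
  have hkey : ∀ x, x ∉ B → g x ∈ g '' frontier A := by
    intro x hx
    obtain ⟨R, hR⟩ := hAc.isBounded.subset_closedBall (g x)
    set u := x - g x with hu
    have hune : u ≠ 0 := sub_ne_zero.2 fun h => hx (h ▸ (hg x).1)
    set T := (max R 0 + 1) / ‖u‖ with hT
    have hT0 : 0 ≤ T := by positivity
    have hgxA : g x ∈ A := hBA (hg x).1
    have hout : g x + T • u ∉ A := by
      intro hmem
      have hd : dist (g x + T • u) (g x) ≤ R := hR hmem
      rw [dist_eq_norm, add_sub_cancel_left, norm_smul, Real.norm_eq_abs,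
        abs_of_nonneg hT0, hT, div_mul_cancel₀ _ (norm_ne_zero_iff.2 hune)] at hd
      have : R ≤ max R 0 := le_max_left _ _
      linarith
    have hcont : Continuous fun s : ℝ => g x + s • u :=
      continuous_const.add (continuous_id.smul continuous_const)
    obtain ⟨s, hs0, hsf⟩ := exists_mem_frontier_of_path' hcont hT0 (by simpa using hgxA) hout
    exact ⟨g x + s • u, hsf, (isProjOn_unique (hg _) (isProjOn_ray (hg x) hs0)).symm ▸ rfl⟩
  have himg : frontier B \ S ⊆ g '' (frontier A \ S) := by
    intro y hy
    have hyB : y ∈ B := hfrB hy.1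
    have hyim : y ∈ g '' frontier A := by
      have hclosed : IsClosed (g '' frontier A) := (hfrA_cpt.image hgLip.continuous).isClosed
      rw [← hclosed.closure_eq]
      have hycl : y ∈ closure Bᶜ := by
        have := hy.1
        rw [frontier_eq_closure_inter_closure] at this
        exact this.2
      obtain ⟨x, hxmem, hxlim⟩ := mem_closure_iff_seq_limit.1 hycl
      have hlim : Filter.Tendsto (fun n => g (x n)) Filter.atTop (nhds (g y)) :=
        ((hgLip.continuous.tendsto y).comp hxlim)
      rw [hgfix y hyB] at hlim
      exact mem_closure_of_tendsto hlim
        (Filter.Eventually.of_forall fun n => hkey (x n) (hxmem n))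
    obtain ⟨a, ha, hay⟩ := hyim
    refine ⟨a, ⟨ha, fun haS => ?_⟩, hay⟩
    exact hy.2 (by rw [← hay, hgfix a (hSB haS)]; exact haS)
  calc μH[1] (frontier B \ S) ≤ μH[1] (g '' (frontier A \ S)) := measure_mono himg
    _ ≤ 1 * μH[1] (frontier A \ S) := by
        simpa using hgLip.hausdorffMeasure_image_le (by norm_num : (0:ℝ) ≤ 1) (frontier A \ S)
    _ = μH[1] (frontier A \ S) := one_mul _
end

section
/- If a path f in F = ℝ² \ O (O convex) contains, for each i, a point pᵢ ∈ Hᵢ, then V({p₁,…,pₙ}) = F, i.e., the path is a watchman route. -/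
theorem path_through_all_halfplanes_is_watchman (n : ℕ)
    (f : Fin n → (EuclideanSpace ℝ (Fin 2) →ₗ[ℝ] ℝ)) (c : Fin n → ℝ)
    (hf : ∀ i, f i ≠ 0)
    (O : Set (EuclideanSpace ℝ (Fin 2)))
    (hO : O = ⋂ i, {x | f i x ≤ c i})
    (hOc : IsCompact O) (hOint : (interior O).Nonempty)
    (F : Set (EuclideanSpace ℝ (Fin 2))) (hF : F = (interior O)ᶜ)
    (H : Fin n → Set (EuclideanSpace ℝ (Fin 2)))
    (hH : ∀ i, H i = {x | c i < f i x})
    (p : Fin n → EuclideanSpace ℝ (Fin 2)) (hp : ∀ i, p i ∈ H i) :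
    {x ∈ F | ∃ i, segment ℝ x (p i) ∩ interior O = ∅} = F := by
  have hcont : ∀ i, Continuous (f i) := fun i => (f i).continuous_of_finiteDimensional
  -- interior O is contained in each strict halfspace
  have hint : ∀ i, ∀ y ∈ interior O, f i y < c i := by
    intro i y hy
    by_contra hlt
    push_neg at hlt
    obtain ⟨ε, hε, hball⟩ := Metric.isOpen_iff.1 isOpen_interior y hy
    -- pick v with f i v > 0
    obtain ⟨w, hw⟩ : ∃ w, f i w ≠ 0 := by
      by_contra hall
      push_neg at hall
      exact hf i (LinearMap.ext fun x => by simpa using hall x)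
    have hwne : w ≠ 0 := fun h => hw (by simp [h])
    set v : EuclideanSpace ℝ (Fin 2) := if 0 < f i w then w else -w with hv
    have hfv : 0 < f i v := by
      rcases lt_trichotomy (f i w) 0 with h | h | h
      · simp only [hv, if_neg (not_lt.2 h.le), map_neg]; linarith
      · exact absurd h hw
      · simpa [hv, if_pos h]
    have hvne : v ≠ 0 := fun h => by simp [h] at hfv
    have hnv : 0 < ‖v‖ := norm_pos_iff.2 hvne
    set t : ℝ := ε / (2 * ‖v‖) with ht
    have htpos : 0 < t := div_pos hε (by positivity)
    have hmem : y + t • v ∈ Metric.ball y ε := by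
      rw [Metric.mem_ball, dist_eq_norm]
      have h2 : y + t • v - y = t • v := by abel
      rw [h2, norm_smul, Real.norm_eq_abs, abs_of_pos htpos, ht]
      have : ε / (2 * ‖v‖) * ‖v‖ = ε / 2 := by field_simp
      rw [this]; linarith
    have : y + t • v ∈ O := interior_subset (hball hmem)
    rw [hO] at this
    have := Set.mem_iInter.1 this i
    simp only [Set.mem_setOf_eq, map_add, map_smul, smul_eq_mul] at this
    nlinarith
  ext x
  simp only [Set.mem_setOf_eq, Set.mem_sep_iff, and_iff_left_iff_imp]
  intro hxF
  have hxint : x ∉ interior O := by rw [hF] at hxF; exact hxF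
  -- the open intersection of strict halfspaces is inside interior O
  have hU : (⋂ i, {x | f i x < c i}) ⊆ interior O := by
    apply interior_maximal
    · rw [hO]
      exact Set.iInter_mono fun i z hz => le_of_lt (show f i z < c i from hz)
    · exact isOpen_iInter_of_finite fun i => isOpen_lt (hcont i) continuous_const
  have : x ∉ ⋂ i, {x | f i x < c i} := fun h => hxint (hU h)
  rw [Set.mem_iInter] at this
  push_neg at this
  obtain ⟨i, hi⟩ := this
  simp only [Set.mem_setOf_eq, not_lt] at hi
  refine ⟨i, Set.eq_empty_iff_forall_notMem.2 fun y ⟨hyseg, hyint⟩ => ?_⟩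
  obtain ⟨a, b, ha, hb, hab, hy⟩ := hyseg
  have hpi : c i < f i (p i) := by have := hp i; rwa [hH i] at this
  have : c i ≤ f i y := by
    rw [← hy]
    simp only [map_add, map_smul, smul_eq_mul]
    have h1 : a * c i ≤ a * f i x := mul_le_mul_of_nonneg_left hi ha
    have h2 : b * c i ≤ b * f i (p i) := mul_le_mul_of_nonneg_left hpi.le hb
    have h3 : a * c i + b * c i = c i := by rw [← add_mul, hab, one_mul]
    linarith
  exact absurd (hint i y hyint) (not_lt.2 this)
end
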